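/- Under the perturbed basic Cholesky-QR model, if κ(A)²γ₂ < 1 where γ₂ ≡ 2ε_A + ε_A² + (1+ε_A)²(ε₁ + (1+ε₁)ε₂), and if Ĝ + E₂ = R̂ᵀR̂ with R̂ ∈ ℝ^{n×n}, then R̂ is nonsingular and κ(R̂) ≤ κ(A) · sqrt((1+γ₂)/(1 − κ(A)²γ₂)). -/

import Mathlib

/-!
With `S = AᵀA` and `T = R̂ᵀR̂ = Ĝ + E₂` one has `T - S = AᵀE + EᵀA + EᵀE + E₁ + E₂`, and the
triangle inequality together with `‖A + E‖ ≤ (1 + ε_A)‖A‖` and `‖Ĝ‖ ≤ (1 + ε₁)‖A + E‖²` gives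
`‖T - S‖ ≤ γ₂‖A‖² = γ₂σ₁(A)²`. Weyl's inequality at the two ends of the spectrum then gives
`σ₁(R̂)² ≤ (1 + γ₂)σ₁(A)²` and `σₙ(R̂)² ≥ σₙ(A)² - γ₂σ₁(A)² = σₙ(A)²(1 - κ(A)²γ₂) > 0`,
so `R̂` is nonsingular and `κ(R̂) = σ₁(R̂)/σₙ(R̂)` obeys the stated bound.
-/

open Matrix

/-- Spectral (two-)norm of a real matrix. -/
noncomputable def spec {m n : ℕ} (M : Matrix (Fin m) (Fin n) ℝ) : ℝ :=
  ‖LinearMap.toContinuousLinearMap (Matrix.toEuclideanLin M)‖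

/-- Singular values of a real `m × n` matrix, in decreasing order:
`singularValues M i` is `σ_{i+1}(M)` (0-based). -/
noncomputable def singularValues {m n : ℕ} (M : Matrix (Fin m) (Fin n) ℝ) : Fin n → ℝ :=
  fun i =>
    Real.sqrt (((Matrix.isHermitian_conjTranspose_mul_self M).eigenvalues ∘
      ⇑(Tuple.sort (Matrix.isHermitian_conjTranspose_mul_self M).eigenvalues)) i.rev)

/-- Two-norm condition number `κ(M) = σ₁(M)/σₙ(M)`. -/
noncomputable def kappa {m n : ℕ} (M : Matrix (Fin m) (Fin n) ℝ) : ℝ :=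
  if h : 0 < n then
    singularValues M ⟨0, h⟩ / singularValues M ⟨n - 1, Nat.sub_lt h Nat.one_pos⟩
  else 1

/-- Smallest singular value `σₙ(M)`. -/
noncomputable def sigmaMin {m n : ℕ} (M : Matrix (Fin m) (Fin n) ℝ) : ℝ :=
  if h : 0 < n then singularValues M ⟨n - 1, Nat.sub_lt h Nat.one_pos⟩ else 1

/-- Eigenvalues of a real symmetric matrix in decreasing order:
`symmEigs M j` is `λ_{j+1}(M)` (0-based). -/
noncomputable def symmEigs {n : ℕ} (M : Matrix (Fin n) (Fin n) ℝ) : Fin n → ℝ :=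
  fun j =>
    if h : M.IsHermitian then (h.eigenvalues ∘ ⇑(Tuple.sort h.eigenvalues)) j.rev else 0

open scoped Matrix.Norms.L2Operator RealInnerProductSpace

lemma spec_eq_norm {m n : ℕ} (M : Matrix (Fin m) (Fin n) ℝ) : spec M = ‖M‖ := rfl

lemma norm_toEuclideanLin_apply_le {m n : ℕ} (B : Matrix (Fin m) (Fin n) ℝ)
    (x : EuclideanSpace ℝ (Fin n)) : ‖toEuclideanLin B x‖ ≤ ‖B‖ * ‖x‖ :=
  (toEuclideanLin.trans LinearMap.toContinuousLinearMap B).le_opNorm x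

lemma inner_toEuclideanLin_self_le_norm_mul {n : ℕ} (N : Matrix (Fin n) (Fin n) ℝ)
    (x : EuclideanSpace ℝ (Fin n)) : ⟪x, toEuclideanLin N x⟫ ≤ ‖N‖ * ‖x‖ ^ 2 :=
  calc ⟪x, toEuclideanLin N x⟫ ≤ ‖x‖ * ‖toEuclideanLin N x‖ := real_inner_le_norm _ _
    _ ≤ ‖x‖ * (‖N‖ * ‖x‖) := by gcongr; exact norm_toEuclideanLin_apply_le N x
    _ = ‖N‖ * ‖x‖ ^ 2 := by ring

namespace Matrix.IsHermitian

variable {n : ℕ} {M : Matrix (Fin n) (Fin n) ℝ}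

/-- The eigenvalues in increasing order (the order used by `singularValues`). -/
noncomputable def sortedEigenvalues (hM : M.IsHermitian) : Fin n → ℝ :=
  hM.eigenvalues ∘ ⇑(Tuple.sort hM.eigenvalues)

lemma exists_sortedEigenvalues_eq (hM : M.IsHermitian) (i : Fin n) :
    ∃ j, hM.sortedEigenvalues j = hM.eigenvalues i :=
  ⟨(Tuple.sort hM.eigenvalues)⁻¹ i, by simp [sortedEigenvalues]⟩

lemma toEuclideanLin_eigenvectorBasis (hM : M.IsHermitian) (i : Fin n) :
    toEuclideanLin M (hM.eigenvectorBasis i) = hM.eigenvalues i • hM.eigenvectorBasis i := by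
  rw [toEuclideanLin, toLpLin_apply, hM.mulVec_eigenvectorBasis]
  rfl

lemma repr_toEuclideanLin (hM : M.IsHermitian) (x : EuclideanSpace ℝ (Fin n)) (i : Fin n) :
    hM.eigenvectorBasis.repr (toEuclideanLin M x) i =
      hM.eigenvalues i * hM.eigenvectorBasis.repr x i := by
  rw [OrthonormalBasis.repr_apply_apply, OrthonormalBasis.repr_apply_apply,
    ← isSymmetric_toEuclideanLin_iff.2 hM, toEuclideanLin_eigenvectorBasis, real_inner_smul_left]

lemma inner_toEuclideanLin_self (hM : M.IsHermitian) (x : EuclideanSpace ℝ (Fin n)) :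
    ⟪x, toEuclideanLin M x⟫ = ∑ i, hM.eigenvalues i * hM.eigenvectorBasis.repr x i ^ 2 := by
  rw [← hM.eigenvectorBasis.repr.inner_map_map, EuclideanSpace.inner_eq_star_dotProduct]
  simp [dotProduct, repr_toEuclideanLin, sq, mul_assoc]

lemma norm_sq_eq_sum_repr (hM : M.IsHermitian) (x : EuclideanSpace ℝ (Fin n)) :
    ‖x‖ ^ 2 = ∑ i, hM.eigenvectorBasis.repr x i ^ 2 := by
  rw [← hM.eigenvectorBasis.repr.norm_map, EuclideanSpace.norm_sq_eq]
  simp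

section Rayleigh

variable {k : ℕ} {S T : Matrix (Fin (k + 1)) (Fin (k + 1)) ℝ}

lemma sortedEigenvalues_zero_le (hS : S.IsHermitian) (i : Fin (k + 1)) :
    hS.sortedEigenvalues 0 ≤ hS.eigenvalues i := by
  obtain ⟨j, hj⟩ := hS.exists_sortedEigenvalues_eq i
  exact hj ▸ Tuple.monotone_sort _ (Fin.zero_le j)

lemma eigenvalues_le_sortedEigenvalues_last (hS : S.IsHermitian) (i : Fin (k + 1)) :
    hS.eigenvalues i ≤ hS.sortedEigenvalues (Fin.last k) := by
  obtain ⟨j, hj⟩ := hS.exists_sortedEigenvalues_eq i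
  exact hj ▸ Tuple.monotone_sort _ (Fin.le_last j)

lemma sortedEigenvalues_zero_mul_le_inner (hS : S.IsHermitian)
    (x : EuclideanSpace ℝ (Fin (k + 1))) :
    hS.sortedEigenvalues 0 * ‖x‖ ^ 2 ≤ ⟪x, toEuclideanLin S x⟫ := by
  rw [hS.inner_toEuclideanLin_self, hS.norm_sq_eq_sum_repr, Finset.mul_sum]
  exact Finset.sum_le_sum fun i _ =>
    mul_le_mul_of_nonneg_right (hS.sortedEigenvalues_zero_le i) (sq_nonneg _)

lemma inner_le_sortedEigenvalues_last_mul (hS : S.IsHermitian)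
    (x : EuclideanSpace ℝ (Fin (k + 1))) :
    ⟪x, toEuclideanLin S x⟫ ≤ hS.sortedEigenvalues (Fin.last k) * ‖x‖ ^ 2 := by
  rw [hS.inner_toEuclideanLin_self, hS.norm_sq_eq_sum_repr, Finset.mul_sum]
  exact Finset.sum_le_sum fun i _ =>
    mul_le_mul_of_nonneg_right (hS.eigenvalues_le_sortedEigenvalues_last i) (sq_nonneg _)

lemma exists_norm_eq_one_inner_eq_sortedEigenvalues (hS : S.IsHermitian) (j : Fin (k + 1)) :
    ∃ v : EuclideanSpace ℝ (Fin (k + 1)), ‖v‖ = 1 ∧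
      ⟪v, toEuclideanLin S v⟫ = hS.sortedEigenvalues j := by
  refine ⟨hS.eigenvectorBasis (Tuple.sort hS.eigenvalues j),
    hS.eigenvectorBasis.orthonormal.1 _, ?_⟩
  rw [toEuclideanLin_eigenvectorBasis, real_inner_smul_right, real_inner_self_eq_norm_sq,
    hS.eigenvectorBasis.orthonormal.1, one_pow, mul_one]
  rfl

lemma sortedEigenvalues_last_le_add_norm_sub (hS : S.IsHermitian) (hT : T.IsHermitian) :
    hT.sortedEigenvalues (Fin.last k) ≤ hS.sortedEigenvalues (Fin.last k) + ‖T - S‖ := by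
  obtain ⟨v, hv, hTv⟩ := hT.exists_norm_eq_one_inner_eq_sortedEigenvalues (Fin.last k)
  have hSv := hS.inner_le_sortedEigenvalues_last_mul v
  have hΔv := inner_toEuclideanLin_self_le_norm_mul (T - S) v
  rw [map_sub, LinearMap.sub_apply, inner_sub_right] at hΔv
  rw [hv] at hSv hΔv
  linarith

lemma sortedEigenvalues_zero_sub_norm_sub_le (hS : S.IsHermitian) (hT : T.IsHermitian) :
    hS.sortedEigenvalues 0 - ‖T - S‖ ≤ hT.sortedEigenvalues 0 := by
  obtain ⟨v, hv, hTv⟩ := hT.exists_norm_eq_one_inner_eq_sortedEigenvalues 0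
  have hSv := hS.sortedEigenvalues_zero_mul_le_inner v
  have hΔv := inner_toEuclideanLin_self_le_norm_mul (S - T) v
  rw [map_sub, LinearMap.sub_apply, inner_sub_right, norm_sub_rev] at hΔv
  rw [hv] at hSv hΔv
  linarith

end Rayleigh

end Matrix.IsHermitian

section SingularValues

open Matrix.IsHermitian

variable {m m' k : ℕ}

lemma inner_toEuclideanLin_conjTranspose_mul_self {n : ℕ} (B : Matrix (Fin m) (Fin n) ℝ)
    (x : EuclideanSpace ℝ (Fin n)) :
    ⟪x, toEuclideanLin (Bᴴ * B) x⟫ = ‖toEuclideanLin B x‖ ^ 2 := by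
  rw [toEuclideanLin, toLpLin_mul_same, ← toEuclideanLin, ← toEuclideanLin, LinearMap.comp_apply,
    toEuclideanLin_conjTranspose_eq_adjoint, LinearMap.adjoint_inner_right,
    real_inner_self_eq_norm_sq]

lemma sq_singularValues {n : ℕ} (B : Matrix (Fin m) (Fin n) ℝ) (i : Fin n) :
    singularValues B i ^ 2 = (isHermitian_conjTranspose_mul_self B).sortedEigenvalues i.rev :=
  Real.sq_sqrt ((posSemidef_conjTranspose_mul_self B).eigenvalues_nonneg _)

lemma singularValues_nonneg {n : ℕ} (B : Matrix (Fin m) (Fin n) ℝ) (i : Fin n) :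
    0 ≤ singularValues B i :=
  Real.sqrt_nonneg _

lemma singularValues_antitone {n : ℕ} (B : Matrix (Fin m) (Fin n) ℝ) :
    Antitone (singularValues B) :=
  fun _ _ hij => Real.sqrt_le_sqrt (Tuple.monotone_sort _ (Fin.rev_le_rev.2 hij))

lemma singularValues_zero_eq_norm (B : Matrix (Fin m) (Fin (k + 1)) ℝ) :
    singularValues B 0 = ‖B‖ := by
  have hG := isHermitian_conjTranspose_mul_self B
  have hσ : singularValues B 0 ^ 2 = hG.sortedEigenvalues (Fin.last k) := by
    rw [sq_singularValues, Fin.rev_zero]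
  have hσ0 := singularValues_nonneg B 0
  apply le_antisymm
  · obtain ⟨v, hv, hGv⟩ := hG.exists_norm_eq_one_inner_eq_sortedEigenvalues (Fin.last k)
    rw [inner_toEuclideanLin_conjTranspose_mul_self, ← hσ] at hGv
    have hBv : ‖toEuclideanLin B v‖ ≤ ‖B‖ := by
      simpa [hv] using norm_toEuclideanLin_apply_le B v
    rw [← sq_le_sq₀ hσ0 (norm_nonneg B), ← hGv]
    gcongr
  · rw [l2_opNorm_def]
    refine ContinuousLinearMap.opNorm_le_bound _ hσ0 fun x => ?_
    change ‖toEuclideanLin B x‖ ≤ _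
    rw [← sq_le_sq₀ (norm_nonneg _) (by positivity), mul_pow, hσ,
      ← inner_toEuclideanLin_conjTranspose_mul_self]
    exact hG.inner_le_sortedEigenvalues_last_mul x

lemma singularValues_last_pos_of_rank_eq (B : Matrix (Fin m) (Fin (k + 1)) ℝ)
    (hB : B.rank = k + 1) : 0 < singularValues B (Fin.last k) := by
  have hG := isHermitian_conjTranspose_mul_self B
  refine Real.sqrt_pos.2 <|
    ((posSemidef_conjTranspose_mul_self B).eigenvalues_nonneg _).lt_of_ne' fun h0 => ?_
  have hcard := hG.rank_eq_card_non_zero_eigs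
  rw [rank_conjTranspose_mul_self, hB] at hcard
  refine (Fintype.card_subtype_lt (p := fun i => hG.eigenvalues i ≠ 0) (not_not.2 h0)).ne ?_
  rw [← hcard, Fintype.card_fin]

lemma sq_singularValues_zero_le (A : Matrix (Fin m) (Fin (k + 1)) ℝ)
    (B : Matrix (Fin m') (Fin (k + 1)) ℝ) :
    singularValues B 0 ^ 2 ≤ singularValues A 0 ^ 2 + ‖Bᴴ * B - Aᴴ * A‖ := by
  simp only [sq_singularValues, Fin.rev_zero]
  exact sortedEigenvalues_last_le_add_norm_sub _ _

lemma sq_singularValues_last_sub_le (A : Matrix (Fin m) (Fin (k + 1)) ℝ)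
    (B : Matrix (Fin m') (Fin (k + 1)) ℝ) :
    singularValues A (Fin.last k) ^ 2 - ‖Bᴴ * B - Aᴴ * A‖ ≤ singularValues B (Fin.last k) ^ 2 := by
  simp only [sq_singularValues, Fin.rev_last]
  exact sortedEigenvalues_zero_sub_norm_sub_le _ _

lemma kappa_eq_div (B : Matrix (Fin m) (Fin (k + 1)) ℝ) :
    kappa B = singularValues B 0 / singularValues B (Fin.last k) :=
  dif_pos k.succ_pos

lemma one_le_kappa_of_rank_eq (A : Matrix (Fin m) (Fin (k + 1)) ℝ) (hA : A.rank = k + 1) :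
    1 ≤ kappa A := by
  rw [kappa_eq_div, one_le_div (singularValues_last_pos_of_rank_eq A hA)]
  exact singularValues_antitone A (Fin.zero_le _)

lemma isUnit_det_of_singularValues_last_pos {R : Matrix (Fin (k + 1)) (Fin (k + 1)) ℝ}
    (hR : 0 < singularValues R (Fin.last k)) : IsUnit R.det := by
  have hG := isHermitian_conjTranspose_mul_self R
  have hmin : 0 < hG.sortedEigenvalues 0 := by
    simpa [sq_singularValues] using pow_pos hR 2
  have hdet : 0 < (Rᴴ * R).det := by
    rw [hG.det_eq_prod_eigenvalues]
    exact Finset.prod_pos fun i _ => hmin.trans_le (hG.sortedEigenvalues_zero_le i)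
  rw [det_mul, det_conjTranspose] at hdet
  exact isUnit_iff_ne_zero.2 fun h0 => by simp [h0] at hdet

end SingularValues

lemma norm_add_conjTranspose_mul_add_sub_le {m n : ℕ} (A E : Matrix (Fin m) (Fin n) ℝ) :
    ‖(A + E)ᴴ * (A + E) - Aᴴ * A‖ ≤ 2 * ‖A‖ * ‖E‖ + ‖E‖ ^ 2 := by
  have hsplit : (A + E)ᴴ * (A + E) - Aᴴ * A = Aᴴ * E + Eᴴ * (A + E) := by
    simp only [conjTranspose_add, Matrix.add_mul, Matrix.mul_add]
    abel
  have hAE : ‖Aᴴ * E‖ ≤ ‖A‖ * ‖E‖ := l2_opNorm_conjTranspose A ▸ l2_opNorm_mul Aᴴ E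
  have hEA : ‖Eᴴ * (A + E)‖ ≤ ‖E‖ * (‖A‖ + ‖E‖) :=
    (l2_opNorm_conjTranspose E ▸ l2_opNorm_mul Eᴴ (A + E)).trans (by gcongr; exact norm_add_le _ _)
  rw [hsplit]
  linarith [norm_add_le (Aᴴ * E) (Eᴴ * (A + E))]

lemma norm_conjTranspose_mul_self_sub_le {m n : ℕ} {A E : Matrix (Fin m) (Fin n) ℝ}
    {E₁ E₂ R : Matrix (Fin n) (Fin n) ℝ} {εA ε₁ ε₂ : ℝ} (hε₁ : 0 ≤ ε₁) (hε₂ : 0 ≤ ε₂)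
    (hE : ‖E‖ ≤ εA * ‖A‖) (hE₁ : ‖E₁‖ ≤ ε₁ * ‖A + E‖ ^ 2)
    (hE₂ : ‖E₂‖ ≤ ε₂ * ‖(A + E)ᴴ * (A + E) + E₁‖)
    (hR : (A + E)ᴴ * (A + E) + E₁ + E₂ = Rᴴ * R) :
    ‖Rᴴ * R - Aᴴ * A‖ ≤ (2 * εA + εA ^ 2 + (1 + εA) ^ 2 * (ε₁ + (1 + ε₁) * ε₂)) * ‖A‖ ^ 2 := by
  have hsplit : Rᴴ * R - Aᴴ * A = ((A + E)ᴴ * (A + E) - Aᴴ * A) + E₁ + E₂ := by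
    rw [← hR]
    abel
  have hAE : ‖A + E‖ ^ 2 ≤ (1 + εA) ^ 2 * ‖A‖ ^ 2 := by
    rw [← mul_pow]
    exact pow_le_pow_left₀ (norm_nonneg _) ((norm_add_le A E).trans (by linarith)) 2
  have hG : ‖(A + E)ᴴ * (A + E) + E₁‖ ≤ (1 + ε₁) * ((1 + εA) ^ 2 * ‖A‖ ^ 2) := by
    refine (norm_add_le _ _).trans ?_
    rw [l2_opNorm_conjTranspose_mul_self, ← sq]
    nlinarith
  have hE₁' : ‖E₁‖ ≤ ε₁ * ((1 + εA) ^ 2 * ‖A‖ ^ 2) := hE₁.trans (by gcongr)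
  have hE₂' : ‖E₂‖ ≤ ε₂ * ((1 + ε₁) * ((1 + εA) ^ 2 * ‖A‖ ^ 2)) := hE₂.trans (by gcongr)
  have hEsq : ‖E‖ ^ 2 ≤ εA ^ 2 * ‖A‖ ^ 2 := by
    rw [← mul_pow]
    exact pow_le_pow_left₀ (norm_nonneg _) hE 2
  have hAE' : ‖A‖ * ‖E‖ ≤ εA * ‖A‖ ^ 2 := by nlinarith [norm_nonneg A]
  rw [hsplit]
  calc _ ≤ ‖(A + E)ᴴ * (A + E) - Aᴴ * A‖ + ‖E₁‖ + ‖E₂‖ := norm_add₃_le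
    _ ≤ 2 * ‖A‖ * ‖E‖ + ‖E‖ ^ 2 + ‖E₁‖ + ‖E₂‖ := by
      gcongr; exact norm_add_conjTranspose_mul_add_sub_le A E
    _ ≤ _ := by linarith

lemma kappa_le_of_norm_conjTranspose_mul_self_sub_le {m m' k : ℕ}
    {A : Matrix (Fin m) (Fin (k + 1)) ℝ} {B : Matrix (Fin m') (Fin (k + 1)) ℝ}
    (hA : A.rank = k + 1) {γ : ℝ} (hΔ : ‖Bᴴ * B - Aᴴ * A‖ ≤ γ * ‖A‖ ^ 2)
    (hsmall : kappa A ^ 2 * γ < 1) :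
    0 < singularValues B (Fin.last k) ∧
      kappa B ≤ kappa A * √((1 + γ) / (1 - kappa A ^ 2 * γ)) := by
  have hb : 0 < singularValues A (Fin.last k) := singularValues_last_pos_of_rank_eq A hA
  have ha : 0 < singularValues A 0 := hb.trans_le (singularValues_antitone A (Fin.zero_le _))
  have ha'0 := singularValues_nonneg B 0
  have hb'0 := singularValues_nonneg B (Fin.last k)
  have hweyl₀ := sq_singularValues_zero_le A B
  have hweyl₁ := sq_singularValues_last_sub_le A B
  have hκ := kappa_eq_div A
  rw [← singularValues_zero_eq_norm A] at hΔ
  rw [kappa_eq_div B]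
  set a := singularValues A 0
  set b := singularValues A (Fin.last k)
  set a' := singularValues B 0
  set b' := singularValues B (Fin.last k)
  have hγ : 0 ≤ 1 + γ := by
    nlinarith [norm_nonneg (Bᴴ * B - Aᴴ * A)]
  have hδ : 0 < 1 - kappa A ^ 2 * γ := by linarith
  have ha' : a' ≤ √(1 + γ) * a := by
    refine (sq_le_sq₀ ha'0 (by positivity)).1 ?_
    rw [mul_pow, Real.sq_sqrt hγ]
    linarith
  have hb' : b * √(1 - kappa A ^ 2 * γ) ≤ b' := by
    refine (sq_le_sq₀ (by positivity) hb'0).1 ?_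
    rw [mul_pow, Real.sq_sqrt hδ.le]
    have : a ^ 2 = kappa A ^ 2 * b ^ 2 := by rw [hκ]; field_simp
    nlinarith
  have hb'pos : 0 < b' := lt_of_lt_of_le (by positivity) hb'
  refine ⟨hb'pos, ?_⟩
  calc a' / b' ≤ √(1 + γ) * a / (b * √(1 - kappa A ^ 2 * γ)) :=
      div_le_div₀ (by positivity) ha' (by positivity) hb'
    _ = kappa A * √((1 + γ) / (1 - kappa A ^ 2 * γ)) := by
      rw [Real.sqrt_div' _ hδ.le, hκ]
      ring

theorem stmt_3_general {m n : ℕ} (A E : Matrix (Fin m) (Fin n) ℝ)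
    (E₁ E₂ Ghat Rhat : Matrix (Fin n) (Fin n) ℝ)
    (hA : A.rank = n)
    (hG : Ghat = (A + E)ᵀ * (A + E) + E₁)
    (εA ε₁ ε₂ γ₂ : ℝ)
    (hεA : εA = spec E / spec A)
    (hε₁ : ε₁ = spec E₁ / spec (A + E) ^ 2)
    (hε₂ : ε₂ = spec E₂ / spec Ghat)
    (hγ₂ : γ₂ = 2 * εA + εA ^ 2 + (1 + εA) ^ 2 * (ε₁ + (1 + ε₁) * ε₂))
    (hsmall : kappa A ^ 2 * γ₂ < 1)
    (hchol : Ghat + E₂ = Rhatᵀ * Rhat) :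
    IsUnit Rhat.det ∧
      kappa Rhat ≤ kappa A * Real.sqrt ((1 + γ₂) / (1 - kappa A ^ 2 * γ₂)) := by
  simp only [spec_eq_norm] at hεA hε₁ hε₂
  rw [← conjTranspose_eq_transpose_of_trivial] at hG hchol
  have hεA0 : 0 ≤ εA := hεA ▸ by positivity
  have hε₁0 : 0 ≤ ε₁ := hε₁ ▸ by positivity
  have hε₂0 : 0 ≤ ε₂ := hε₂ ▸ by positivity
  have hγ₂0 : 0 ≤ γ₂ := hγ₂ ▸ by positivity
  obtain _ | k := n
  · refine ⟨by simp, ?_⟩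
    simp only [kappa, lt_self_iff_false, dite_false, one_pow, one_mul] at hsmall ⊢
    exact Real.one_le_sqrt.2 ((one_le_div (by linarith)).2 (by linarith))
  have hγ₂1 : γ₂ < 1 := by nlinarith [one_le_kappa_of_rank_eq A hA]
  have hA0 : ‖A‖ ≠ 0 := norm_ne_zero_iff.2 fun h => by simp [h] at hA
  -- `ε₁` and `ε₂` carry the junk value `x / 0 = 0` when `‖A + E‖` or `‖Ĝ‖` vanishes;
  -- either case would force `γ₂ ≥ 1`.
  have hAE : ‖A + E‖ ≠ 0 := by
    intro h
    have hE : E = -A := eq_neg_of_add_eq_zero_right (norm_eq_zero.1 h)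
    have : εA = 1 := by rw [hεA, hE, norm_neg, div_self hA0]
    nlinarith [mul_nonneg hε₁0 hε₂0]
  have hGhat : ‖Ghat‖ ≠ 0 := by
    intro h
    have hE₁ : E₁ = -((A + E)ᴴ * (A + E)) :=
      eq_neg_of_add_eq_zero_right (norm_eq_zero.1 h ▸ hG).symm
    have : ε₁ = 1 := by
      rw [hε₁, hE₁, norm_neg, l2_opNorm_conjTranspose_mul_self, ← sq, div_self (pow_ne_zero 2 hAE)]
    nlinarith [mul_nonneg hε₁0 hε₂0]
  have hΔ := norm_conjTranspose_mul_self_sub_le (εA := εA) hε₁0 hε₂0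
    (by rw [hεA, div_mul_cancel₀ _ hA0]) (by rw [hε₁, div_mul_cancel₀ _ (pow_ne_zero 2 hAE)])
    (by rw [hε₂, ← hG, div_mul_cancel₀ _ hGhat]) (hG ▸ hchol)
  obtain ⟨hpos, hκ⟩ := kappa_le_of_norm_conjTranspose_mul_self_sub_le hA (hγ₂ ▸ hΔ) hsmall
  exact ⟨isUnit_det_of_singularValues_last_pos hpos, hκ⟩

/-- Theorem 2.2, condition number of the computed Cholesky factor:
since `A` has a thin QR factorization `A = QR` with `κ(R) = κ(A)`, the bound
`κ(R̂) ≤ κ(R)·sqrt((1+γ₂)/(1−κ(A)²γ₂))` is stated with `κ(R)` replaced by `κ(A)`. -/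
theorem stmt_3 {m n : ℕ} (A E : Matrix (Fin m) (Fin n) ℝ)
    (E₁ E₂ Ghat Rhat : Matrix (Fin n) (Fin n) ℝ)
    (hA : A.rank = n) (hE₁ : E₁ᵀ = E₁) (hE₂ : E₂ᵀ = E₂)
    (hG : Ghat = (A + E)ᵀ * (A + E) + E₁)
    (εA ε₁ ε₂ γ₂ : ℝ)
    (hεA : εA = spec E / spec A)
    (hε₁ : ε₁ = spec E₁ / spec (A + E) ^ 2)
    (hε₂ : ε₂ = spec E₂ / spec Ghat)
    (hγ₂ : γ₂ = 2 * εA + εA ^ 2 + (1 + εA) ^ 2 * (ε₁ + (1 + ε₁) * ε₂))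
    (hsmall : kappa A ^ 2 * γ₂ < 1)
    (hchol : Ghat + E₂ = Rhatᵀ * Rhat) :
    IsUnit Rhat.det ∧
      kappa Rhat ≤ kappa A * Real.sqrt ((1 + γ₂) / (1 - kappa A ^ 2 * γ₂)) :=
  stmt_3_general A E E₁ E₂ Ghat Rhat hA hG εA ε₁ ε₂ γ₂ hεA hε₁ hε₂ hγ₂ hsmall hchol
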